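/- Every 3-connected planar graph G with at least one 3-cut has a 3-cut {u,v,w} such that at least one edge closed component of G - {u,v,w} contains no 3-cut, i.e., is 4-connected or isomorphic to K4. -/

import Mathlib

open SimpleGraph Set

/-- A plane embedding of a simple graph: vertices are mapped to points of the plane,
edges to injective arcs, such that arcs meet only in common endpoints. -/
structure PlaneEmbedding {V : Type*} (G : SimpleGraph V) where
  vertexMap : V → ℝ × ℝ
  vertex_inj : Function.Injective vertexMap
  edgeMap : ∀ ⦃a b : V⦄, G.Adj a b → C(unitInterval, ℝ × ℝ)
  edge_start : ∀ ⦃a b : V⦄ (h : G.Adj a b), edgeMap h 0 = vertexMap a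
  edge_end : ∀ ⦃a b : V⦄ (h : G.Adj a b), edgeMap h 1 = vertexMap b
  edge_inj : ∀ ⦃a b : V⦄ (h : G.Adj a b), Function.Injective (edgeMap h)
  edge_symm : ∀ ⦃a b : V⦄ (h : G.Adj a b),
    Set.range (edgeMap h) = Set.range (edgeMap h.symm)
  edge_int : ∀ ⦃a b c d : V⦄ (h : G.Adj a b) (h' : G.Adj c d),
    s(a, b) ≠ s(c, d) →
    Set.range (edgeMap h) ∩ Set.range (edgeMap h') ⊆
      vertexMap '' (({a, b} : Set V) ∩ {c, d})
  edge_no_vertex : ∀ ⦃a b : V⦄ (h : G.Adj a b) (x : V),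
    vertexMap x ∈ Set.range (edgeMap h) → x = a ∨ x = b

variable {V : Type*}

/-- The subset of the plane covered by the drawing of the graph. -/
def PlaneEmbedding.drawing {G : SimpleGraph V} (E : PlaneEmbedding G) : Set (ℝ × ℝ) :=
  Set.range E.vertexMap ∪ ⋃ (a : V) (b : V) (h : G.Adj a b), Set.range (E.edgeMap h)

/-- A face of a plane embedding: a connected component of the complement of the drawing. -/
def PlaneEmbedding.IsFace {G : SimpleGraph V} (E : PlaneEmbedding G)
    (F : Set (ℝ × ℝ)) : Prop :=
  ∃ x ∈ E.drawingᶜ, F = connectedComponentIn E.drawingᶜ x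

/-- A face whose boundary is the union of the arcs of three mutually adjacent vertices. -/
def PlaneEmbedding.FaceIsTriangleOn {G : SimpleGraph V} (E : PlaneEmbedding G)
    (F : Set (ℝ × ℝ)) (a b c : V) : Prop :=
  ∃ (h1 : G.Adj a b) (h2 : G.Adj b c) (h3 : G.Adj c a),
    frontier F = Set.range (E.edgeMap h1) ∪ Set.range (E.edgeMap h2) ∪
      Set.range (E.edgeMap h3)

/-- A face of a plane embedding is a triangle if it is bounded by three arcs of a 3-cycle. -/
def PlaneEmbedding.FaceIsTriangle {G : SimpleGraph V} (E : PlaneEmbedding G)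
    (F : Set (ℝ × ℝ)) : Prop :=
  ∃ a b c : V, E.FaceIsTriangleOn F a b c

/-- `(a,b,c)` is a facial triangle of the embedding `E`. -/
def PlaneEmbedding.IsFacialTriangle {G : SimpleGraph V} (E : PlaneEmbedding G)
    (a b c : V) : Prop :=
  ∃ F : Set (ℝ × ℝ), E.IsFace F ∧ E.FaceIsTriangleOn F a b c

/-- A graph is planar if it admits a plane embedding. -/
def IsPlanar (G : SimpleGraph V) : Prop := Nonempty (PlaneEmbedding G)

/-- A graph is `k`-connected if it has more than `k` vertices and removing fewer than
`k` vertices always leaves a connected graph. -/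
def IsKConnected (k : ℕ) (G : SimpleGraph V) : Prop :=
  k < Nat.card V ∧ ∀ S : Set V, S.Finite → S.ncard < k → (G.induce Sᶜ).Connected

/-- A 3-cut: a set of 3 vertices whose removal disconnects the graph. -/
def IsThreeCut (G : SimpleGraph V) (S : Set V) : Prop :=
  S.ncard = 3 ∧ ¬ (G.induce Sᶜ).Preconnected

/-- `C` is (the vertex set of) a connected component of `G - S`. -/
def IsCompOf (G : SimpleGraph V) (S : Set V) (C : Set V) : Prop :=
  C.Nonempty ∧ C ⊆ Sᶜ ∧ (G.induce C).Connected ∧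
    ∀ a ∈ C, ∀ b ∈ Sᶜ, G.Adj a b → b ∈ C

/-- The edge closed component of `G - {u,v,w}` corresponding to the component `C`:
the graph induced on `C ∪ {u,v,w}` with the edges `uv`, `vw`, `wu` added. -/
def edgeClosedGraph (G : SimpleGraph V) (u v w : V) (C : Set V) :
    SimpleGraph ↥(C ∪ {u, v, w}) :=
  SimpleGraph.fromRel (fun a b =>
    G.Adj a b ∨ ((a : V) ∈ ({u, v, w} : Set V) ∧ (b : V) ∈ ({u, v, w} : Set V)))
/-!
Choose a 3-cut `T` of `G` together with a component `C` of `G - T` that is minimal under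
inclusion. In the edge closed component `H` on `C ∪ T`, the vertices of `T` form a triangle,
so a 3-cut `S` of `H` leaves a component `K` of `H - S` that avoids `T`. Such a `K` lies in `C`
and all its `G`-neighbours lie in `C ∪ T`, so `K` is also a component of `G - S`, and `S` is a
3-cut of `G` since `G - T` has vertices outside `C`. As `S` must meet `C`, `K` is strictly
smaller than `C`, contradicting minimality.
-/

section Components

variable {G : SimpleGraph V} {S C : Set V}

theorem isCompOf_image_supp (c : (G.induce Sᶜ).ConnectedComponent) :
    IsCompOf G S (Subtype.val '' c.supp) := by
  refine ⟨c.nonempty_supp.image _, by rintro _ ⟨x, -, rfl⟩; exact x.2, ?_, ?_⟩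
  · refine c.connected_toSimpleGraph.map
      ⟨fun x => ⟨x.1.1, mem_image_of_mem _ x.2⟩, fun h => h⟩ ?_
    rintro ⟨_, x, hx, rfl⟩
    exact ⟨⟨x, hx⟩, rfl⟩
  · rintro _ ⟨x, hx, rfl⟩ b hb hab
    refine ⟨⟨b, hb⟩, ?_, rfl⟩
    exact c.mem_supp_of_adj_mem_supp hx (show (G.induce Sᶜ).Adj x ⟨b, hb⟩ from hab)

theorem IsCompOf.mem_of_reachable (hC : IsCompOf G S C) {a b : ↥Sᶜ}
    (hab : (G.induce Sᶜ).Reachable a b) (ha : (a : V) ∈ C) : (b : V) ∈ C := by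
  obtain ⟨p⟩ := hab
  induction p with
  | nil => exact ha
  | cons h _ ih => exact ih (hC.2.2.2 _ ha _ (Subtype.mem _) h)

theorem IsCompOf.not_preconnected (hC : IsCompOf G S C) {d : V} (hdS : d ∉ S) (hdC : d ∉ C) :
    ¬ (G.induce Sᶜ).Preconnected := fun hpre => by
  obtain ⟨a, ha⟩ := hC.1
  exact hdC (hC.mem_of_reachable (hpre ⟨a, hC.2.1 ha⟩ ⟨d, hdS⟩) ha)

theorem IsCompOf.exists_notMem (hC : IsCompOf G S C) (hS : ¬ (G.induce Sᶜ).Preconnected) :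
    ∃ d, d ∉ C ∧ d ∉ S := by
  by_contra! h
  have hCS : C = Sᶜ := hC.2.1.antisymm fun d hd => of_not_not fun hdC => hd (h d hdC)
  exact hS (hCS ▸ hC.2.2.1.preconnected)

/-- What survives of a clique lies in a single component of `G - S`, so any other component
avoids it. -/
theorem exists_isCompOf_disjoint_of_isClique {T : Set V} (hT : G.IsClique T)
    (hS : ¬ (G.induce Sᶜ).Preconnected) : ∃ K, IsCompOf G S K ∧ Disjoint K T := by
  by_cases hTS : T ⊆ S
  · obtain ⟨x, -⟩ := not_forall.mp hS
    exact ⟨_, isCompOf_image_supp (G.induce Sᶜ |>.connectedComponentMk x),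
      disjoint_of_subset_left (by rintro _ ⟨y, -, rfl⟩; exact y.2)
        (disjoint_compl_left.mono_right hTS)⟩
  obtain ⟨t₀, ht₀T, ht₀S⟩ := not_subset.mp hTS
  have hx : ∃ x : ↥Sᶜ, ¬ (G.induce Sᶜ).Reachable ⟨t₀, ht₀S⟩ x := by
    by_contra! h
    exact hS fun p q => (h p).symm.trans (h q)
  obtain ⟨x, hx⟩ := hx
  refine ⟨_, isCompOf_image_supp (G.induce Sᶜ |>.connectedComponentMk x), ?_⟩
  rw [Set.disjoint_left]
  rintro _ ⟨t, ht, rfl⟩ htT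
  have ht₀t : (G.induce Sᶜ).Reachable ⟨t₀, ht₀S⟩ t := by
    by_cases h : (t : V) = t₀
    · obtain rfl : t = ⟨t₀, ht₀S⟩ := Subtype.ext h
      rfl
    · exact Adj.reachable (hT ht₀T htT (Ne.symm h))
  exact hx (ht₀t.trans (ConnectedComponent.exact ((ConnectedComponent.mem_supp_iff _ _).mp ht)))

end Components

section EdgeClosed

variable {G : SimpleGraph V} {u v w : V} {C : Set V}

theorem ncard_triple_le (u v w : V) : ({u, v, w} : Set V).ncard ≤ 3 := by
  classical
  rw [← Finset.coe_pair, ← Finset.coe_insert, ncard_coe_finset]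
  exact Finset.card_le_three

theorem edgeClosedGraph_adj_of_adj {a b : ↥(C ∪ {u, v, w})} (h : G.Adj a b) :
    (edgeClosedGraph G u v w C).Adj a b :=
  (fromRel_adj _ _ _).mpr ⟨fun hab => h.ne (congrArg Subtype.val hab), Or.inl (Or.inl h)⟩

theorem isClique_edgeClosedGraph :
    (edgeClosedGraph G u v w C).IsClique (Subtype.val ⁻¹' {u, v, w}) :=
  fun _ ha _ hb hab => (fromRel_adj _ _ _).mpr ⟨hab, Or.inl (Or.inr ⟨ha, hb⟩)⟩

theorem adj_of_edgeClosedGraph_adj {a b : ↥(C ∪ {u, v, w})}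
    (ha : (a : V) ∉ ({u, v, w} : Set V)) (h : (edgeClosedGraph G u v w C).Adj a b) :
    G.Adj a b := by
  obtain ⟨-, (hab | ⟨ha', -⟩) | (hba | ⟨-, ha'⟩)⟩ := (fromRel_adj _ _ _).mp h
  · exact hab
  · exact absurd ha' ha
  · exact hba.symm
  · exact absurd ha' ha

theorem IsCompOf.image_of_edgeClosedGraph (hC : IsCompOf G {u, v, w} C)
    {S K : Set ↥(C ∪ {u, v, w})} (hK : IsCompOf (edgeClosedGraph G u v w C) S K)
    (hKT : Disjoint K (Subtype.val ⁻¹' {u, v, w})) :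
    IsCompOf G (Subtype.val '' S) (Subtype.val '' K) := by
  have hKC : ∀ k ∈ K, (k : V) ∉ ({u, v, w} : Set V) := fun k hk hkT =>
    Set.disjoint_left.mp hKT hk hkT
  refine ⟨hK.1.image _, (image_mono hK.2.1).trans (image_compl_subset Subtype.val_injective),
    ?_, ?_⟩
  · refine hK.2.2.1.map ⟨fun x => ⟨x.1.1, mem_image_of_mem _ x.2⟩,
      fun h => adj_of_edgeClosedGraph_adj (hKC _ (Subtype.mem _)) h⟩ ?_
    rintro ⟨_, x, hx, rfl⟩
    exact ⟨⟨x, hx⟩, rfl⟩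
  · rintro _ ⟨k, hk, rfl⟩ b hbS hkb
    have hb : b ∈ C ∪ {u, v, w} := by
      by_cases hbT : b ∈ ({u, v, w} : Set V)
      · exact Or.inr hbT
      · exact Or.inl (hC.2.2.2 k (k.2.resolve_right (hKC k hk)) b hbT hkb)
    exact ⟨⟨b, hb⟩, hK.2.2.2 k hk _ (fun h => hbS (mem_image_of_mem _ h))
      (edgeClosedGraph_adj_of_adj hkb), rfl⟩

/-- Otherwise `S = {u, v, w}`, and the edge closed graph minus `S` is `G[C]`, which is
connected. -/
theorem IsCompOf.exists_mem_of_isThreeCut_edgeClosedGraph (hC : IsCompOf G {u, v, w} C)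
    {S : Set ↥(C ∪ {u, v, w})} (hS : IsThreeCut (edgeClosedGraph G u v w C) S) :
    ∃ s ∈ S, (s : V) ∈ C := by
  by_contra! hSC
  have hST : Subtype.val '' S = {u, v, w} := by
    refine eq_of_subset_of_ncard_le ?_ ?_ (toFinite _)
    · rintro _ ⟨s, hs, rfl⟩
      exact s.2.resolve_left (hSC s hs)
    · rw [ncard_image_of_injective _ Subtype.val_injective, hS.1]
      exact ncard_triple_le u v w
  apply hS.2
  let f : G.induce C →g (edgeClosedGraph G u v w C).induce Sᶜ :=
    ⟨fun c => ⟨⟨c, Or.inl c.2⟩, fun hc => hSC _ hc c.2⟩,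
      fun h => edgeClosedGraph_adj_of_adj h⟩
  refine (hC.2.2.1.map f ?_).preconnected
  rintro ⟨x, hx⟩
  refine ⟨⟨x, x.2.resolve_right fun hxT => hx ?_⟩, rfl⟩
  obtain ⟨s, hs, hsx⟩ := hST.symm.subset hxT
  exact Subtype.ext hsx ▸ hs

end EdgeClosed

theorem stmt8_general [Fintype V] (G : SimpleGraph V)
    (hex : ∃ S : Set V, IsThreeCut G S) :
    ∃ u v w : V, IsThreeCut G {u, v, w} ∧
      ∃ C : Set V, IsCompOf G {u, v, w} C ∧
        ∀ S : Set ↥(C ∪ {u, v, w}), ¬ IsThreeCut (edgeClosedGraph G u v w C) S := by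
  obtain ⟨T, hT⟩ := hex
  obtain ⟨x, -⟩ := not_forall.mp hT.2
  obtain ⟨C, ⟨T, hT, hC⟩, hCmin⟩ :=
    (toFinite {C | ∃ T, IsThreeCut G T ∧ IsCompOf G T C}).exists_minimal
      ⟨_, T, hT, isCompOf_image_supp (G.induce Tᶜ |>.connectedComponentMk x)⟩
  obtain ⟨u, v, w, -, -, -, rfl⟩ := ncard_eq_three.mp hT.1
  refine ⟨u, v, w, hT, C, hC, fun S hS => ?_⟩
  obtain ⟨K, hK, hKT⟩ := exists_isCompOf_disjoint_of_isClique isClique_edgeClosedGraph hS.2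
  have hK' := hC.image_of_edgeClosedGraph hK hKT
  obtain ⟨d, hdC, hdT⟩ := hC.exists_notMem hT.2
  have hcut : IsThreeCut G (Subtype.val '' S) := by
    refine ⟨by rw [ncard_image_of_injective _ Subtype.val_injective, hS.1],
      hK'.not_preconnected (d := d) ?_ ?_⟩
    · rintro ⟨s, -, rfl⟩
      exact s.2.elim hdC hdT
    · rintro ⟨k, -, rfl⟩
      exact k.2.elim hdC hdT
  have hKC : Subtype.val '' K ⊆ C := by
    rintro _ ⟨k, hk, rfl⟩
    exact k.2.resolve_right (Set.disjoint_left.mp hKT hk)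
  obtain ⟨s, hsS, hsC⟩ := hC.exists_mem_of_isThreeCut_edgeClosedGraph hS
  exact hK'.2.1 (hCmin ⟨_, hcut, hK'⟩ hKC hsC) (mem_image_of_mem _ hsS)

/-- Every 3-connected planar graph with a 3-cut has a 3-cut `{u,v,w}` one of whose edge
closed components has no 3-cut (i.e. is 4-connected or isomorphic to `K₄`). -/
theorem stmt8 [Fintype V] (G : SimpleGraph V)
    (hP : IsPlanar G) (h3 : IsKConnected 3 G)
    (hex : ∃ S : Set V, IsThreeCut G S) :
    ∃ u v w : V, IsThreeCut G {u, v, w} ∧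
      ∃ C : Set V, IsCompOf G {u, v, w} C ∧
        ∀ S : Set ↥(C ∪ {u, v, w}), ¬ IsThreeCut (edgeClosedGraph G u v w C) S :=
  stmt8_general G hex
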